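/- Suppose 1 ≤ m ≤ 2j+1 and gcd(m, 2j+1) = gcd(m+1, 2j+1) = 1. Then for every (x,y) ∈ R^2, the number of lattice points of Λ(m,j) in the translate (x,y)+S(j) is exactly j; that is, S(j) + Λ(m,j) is an exact j-fold lattice tiling of the plane. -/

import Mathlib

/-!
Lattice points have integer coordinates, so only `⌈x⌉` and `⌈y⌉` matter. Column `⌈x⌉ + k`
(`k < 2j`) of the translated staircase is a half-open interval of length `2j - k < N := 2j + 1`,
so it contains at most one lattice point: the lowest one at height `≥ y`, namely `⌈y⌉ + r_k` with
`r_k ∈ [0, N)` the residue of `a + k m` for a fixed `a`. It lies in the staircase iff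
`r_k + k < 2j`.

To count these `k`, note that `k ↦ a + k m`, `k ↦ k` and their sum `k ↦ a + k (m + 1)` are
bijections of `ZMod N` by the gcd hypotheses. Summing `val` over each gives `N (N - 1) / 2`, so the
number of `k` with a carry `N ≤ r_k + k` is `(N - 1) / 2 = j`; exactly one `k` has
`r_k + k = N - 1`, which leaves `j` values with `r_k + k < 2j`.
-/

def Lam (m j : ℕ) : Set (ℝ × ℝ) :=
  {p | ∃ c₁ c₂ : ℤ, p = ((c₁ : ℝ), (c₁ : ℝ) * m + (c₂ : ℝ) * (2 * j + 1))}

def Sstair (j : ℕ) : Set (ℝ × ℝ) :=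
  ⋃ i ∈ Finset.range (2 * j),
    Set.Ico (i : ℝ) ((i : ℝ) + 1) ×ˢ Set.Ico (0 : ℝ) (2 * (j : ℝ) - i)

open Finset

namespace ZMod

variable {N : ℕ} [NeZero N]

theorem two_mul_sum_val : 2 * ∑ z : ZMod N, z.val = N * (N - 1) := by
  obtain ⟨n, rfl⟩ : ∃ n, N = n + 1 := ⟨N - 1, (Nat.succ_pred_eq_of_ne_zero (NeZero.ne N)).symm⟩
  rw [← sum_range_id_mul_two, mul_comm]
  exact congrArg (· * 2) (Fin.sum_univ_eq_sum_range (fun i => i) (n + 1))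

theorem val_add_val_eq_val_add (a b : ZMod N) :
    a.val + b.val = (a + b).val + if N ≤ a.val + b.val then N else 0 := by
  split_ifs with h
  · exact val_add_val_of_le h
  · rw [val_add_of_lt (not_le.mp h), add_zero]

variable (f g h : ZMod N ≃ ZMod N)

theorem two_mul_card_le_val_add_val (hfgh : ∀ z, h z = f z + g z) :
    2 * #{z | N ≤ (f z).val + (g z).val} = N - 1 := by
  have hsum : ∑ z, ((f z).val + (g z).val) =
      ∑ z, (h z).val + N * #{z | N ≤ (f z).val + (g z).val} := by
    rw [card_filter, mul_sum, ← sum_add_distrib]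
    refine sum_congr rfl fun z _ => ?_
    rw [hfgh, mul_ite, mul_one, mul_zero]
    exact val_add_val_eq_val_add _ _
  rw [sum_add_distrib, f.sum_comp val, g.sum_comp val, h.sum_comp val] at hsum
  have hS := two_mul_sum_val (N := N)
  refine Nat.eq_of_mul_eq_mul_left (NeZero.pos N) ?_
  rw [← hS]
  linarith

theorem card_val_add_val_eq_pred (hfgh : ∀ z, h z = f z + g z) :
    #{z | (f z).val + (g z).val = N - 1} = 1 := by
  have hval : ((N - 1 : ℕ) : ZMod N).val = N - 1 :=
    val_cast_of_lt (by have := NeZero.pos N; omega)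
  have key : ∀ z, (f z).val + (g z).val = N - 1 ↔ z = h.symm (N - 1 : ℕ) := by
    intro z
    rw [Equiv.eq_symm_apply, ← (val_injective N).eq_iff, hval, hfgh]
    have := val_add_val_eq_val_add (f z) (g z)
    have := (f z).val_lt
    have := (g z).val_lt
    have := (f z + g z).val_lt
    split_ifs at * <;> omega
  simp [key, filter_eq']

theorem two_mul_card_val_add_val_lt (hfgh : ∀ z, h z = f z + g z) :
    2 * #{z | (f z).val + (g z).val < N - 1} = N - 1 := by
  have hpart : #{z | (f z).val + (g z).val < N - 1} + #{z | (f z).val + (g z).val = N - 1} +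
      #{z | N ≤ (f z).val + (g z).val} = N := by
    rw [card_filter, card_filter, card_filter, ← sum_add_distrib, ← sum_add_distrib]
    trans ∑ _z : ZMod N, 1
    · have := NeZero.pos N
      refine sum_congr rfl fun z _ => ?_
      split_ifs <;> omega
    · simp
  have := two_mul_card_le_val_add_val f g h hfgh
  have := card_val_add_val_eq_pred f g h hfgh
  omega

theorem two_mul_card_val_affine_add_val_lt (a : ZMod N) {m : ZMod N} (hm : IsUnit m)
    (hm' : IsUnit (m + 1)) :
    2 * #{z : ZMod N | (a + z * m).val + z.val < N - 1} = N - 1 :=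
  two_mul_card_val_add_val_lt ((Units.mulRight hm.unit).trans (Equiv.addLeft a)) (Equiv.refl _)
    ((Units.mulRight hm'.unit).trans (Equiv.addLeft a)) fun z => by
      simp only [Equiv.trans_apply, Units.mulRight_apply, IsUnit.unit_spec, Equiv.coe_addLeft,
        Equiv.refl_apply]
      ring

end ZMod

theorem mem_Lam_iff {m j : ℕ} {p : ℝ × ℝ} :
    p ∈ Lam m j ↔ ∃ c v : ℤ, p = ((c : ℝ), (v : ℝ)) ∧ (v : ZMod (2 * j + 1)) = c * m := by
  constructor
  · rintro ⟨c₁, c₂, rfl⟩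
    refine ⟨c₁, c₁ * m + c₂ * (2 * j + 1 : ℕ), by push_cast; rfl, ?_⟩
    simp only [Int.cast_add, Int.cast_mul, Int.cast_natCast, ZMod.natCast_self, mul_zero, add_zero]
  · rintro ⟨c, v, rfl, hv⟩
    obtain ⟨c₂, hc₂⟩ := (ZMod.intCast_eq_intCast_iff_dvd_sub (c * m) v (2 * j + 1)).mp
      (by push_cast; exact hv.symm)
    refine ⟨c, c₂, ?_⟩
    rw [eq_add_of_sub_eq' hc₂]
    push_cast
    ring_nf

theorem intCast_mem_translate_Sstair_iff {j : ℕ} {x y : ℝ} {c v : ℤ} :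
    ((c : ℝ), (v : ℝ)) ∈ (fun p : ℝ × ℝ => (x + p.1, y + p.2)) '' Sstair j ↔
      ∃ i < 2 * j, c = ⌈x⌉ + i ∧ ⌈y⌉ ≤ v ∧ v + i < ⌈y⌉ + 2 * j := by
  have htrans : ∀ p : ℝ × ℝ, p ∈ (fun p : ℝ × ℝ => (x + p.1, y + p.2)) '' Sstair j ↔
      (p.1 - x, p.2 - y) ∈ Sstair j := fun p =>
    ⟨by rintro ⟨q, hq, rfl⟩; simpa using hq, fun h => ⟨_, h, by simp⟩⟩
  rw [htrans]
  simp only [Sstair, Set.mem_iUnion, Set.mem_prod, Set.mem_Ico, Finset.mem_range, exists_prop]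
  refine exists_congr fun i => and_congr_right fun _ => ?_
  rw [eq_comm, ← eq_sub_iff_add_eq, Int.ceil_eq_iff, Int.ceil_le, ← sub_lt_iff_lt_add (b := ⌈y⌉),
    Int.lt_ceil]
  push_cast
  constructor <;> rintro ⟨⟨h₁, h₂⟩, h₃, h₄⟩ <;> refine ⟨⟨?_, ?_⟩, ?_, ?_⟩ <;> linarith

/-- Height above `⌈y⌉` of the lowest point of `Lam m j` in the column `⌈x⌉ + z.val` at height
`≥ y`: lattice heights in that column are exactly the integers `≡ (⌈x⌉ + z) m` mod `2j + 1`. -/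
noncomputable def columnHeight (m j : ℕ) (x y : ℝ) (z : ZMod (2 * j + 1)) : ℕ :=
  (((⌈x⌉ : ZMod (2 * j + 1)) + z) * m - ⌈y⌉).val

noncomputable def columnPoint (m j : ℕ) (x y : ℝ) (z : ZMod (2 * j + 1)) : ℝ × ℝ :=
  (((⌈x⌉ + z.val : ℤ) : ℝ), ((⌈y⌉ + columnHeight m j x y z : ℤ) : ℝ))

theorem columnPoint_injective (m j : ℕ) (x y : ℝ) : Function.Injective (columnPoint m j x y) :=
  fun z w hzw => ZMod.val_injective _ <| by
    simpa only [columnPoint, Int.cast_inj, add_right_inj, Nat.cast_inj] using congrArg Prod.fst hzw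

theorem Lam_inter_translate_Sstair (m j : ℕ) (x y : ℝ) :
    Lam m j ∩ (fun p : ℝ × ℝ => (x + p.1, y + p.2)) '' Sstair j =
      columnPoint m j x y '' {z | columnHeight m j x y z + z.val < 2 * j} := by
  ext p
  constructor
  · rintro ⟨hL, hT⟩
    obtain ⟨c, v, rfl, hcv⟩ := mem_Lam_iff.mp hL
    obtain ⟨i, hi, rfl, hyv, hvy⟩ := intCast_mem_translate_Sstair_iff.mp hT
    have hz : (i : ZMod (2 * j + 1)).val = i := ZMod.val_natCast_of_lt (by omega)
    have hheight : (columnHeight m j x y i : ℤ) = v - ⌈y⌉ := by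
      rw [columnHeight, ← Int.emod_eq_of_lt (a := v - ⌈y⌉) (b := ((2 * j + 1 : ℕ) : ℤ)) (by omega)
        (by omega), ← ZMod.val_intCast]
      push_cast [hcv]
      ring_nf
    refine ⟨i, show _ + _ < 2 * j by omega, ?_⟩
    simp only [columnPoint, hz, hheight]
    push_cast
    ring_nf
  · rintro ⟨z, hz : columnHeight m j x y z + z.val < 2 * j, rfl⟩
    refine ⟨mem_Lam_iff.mpr ⟨_, _, rfl, ?_⟩,
      intCast_mem_translate_Sstair_iff.mpr ⟨z.val, by omega, rfl, by omega, by omega⟩⟩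
    push_cast
    rw [columnHeight, ZMod.natCast_zmod_val, ZMod.natCast_zmod_val]
    ring

theorem stmt8_general (j m : ℕ)
    (hgcd : Nat.gcd m (2 * j + 1) = 1) (hgcd' : Nat.gcd (m + 1) (2 * j + 1) = 1)
    (x y : ℝ) :
    (Lam m j ∩ ((fun p : ℝ × ℝ => (x + p.1, y + p.2)) '' Sstair j)).ncard = j := by
  have hm : IsUnit (m : ZMod (2 * j + 1)) := (ZMod.isUnit_iff_coprime m _).mpr hgcd
  have hm' : IsUnit ((m : ZMod (2 * j + 1)) + 1) := by
    exact_mod_cast (ZMod.isUnit_iff_coprime (m + 1) _).mpr hgcd'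
  have hcount := ZMod.two_mul_card_val_affine_add_val_lt (N := 2 * j + 1) (⌈x⌉ * m - ⌈y⌉) hm hm'
  have hheight : ∀ z, columnHeight m j x y z = (⌈x⌉ * m - ⌈y⌉ + z * m : ZMod (2 * j + 1)).val :=
    fun z => congrArg ZMod.val (by ring)
  rw [Lam_inter_translate_Sstair, Set.ncard_image_of_injective _ (columnPoint_injective m j x y),
    ← Finset.coe_filter_univ, Set.ncard_coe_finset]
  rw [Nat.add_sub_cancel] at hcount
  simp only [hheight]
  omega

/-- S(j) + Λ(m,j) is an exact j-fold lattice tiling: every point of the plane lies in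
exactly j translates of S(j) by lattice vectors, equivalently the number of lattice
points in any translate (x,y) + S(j) is exactly j. -/
theorem stmt8 (j m : ℕ) (hj : 1 ≤ j) (hm1 : 1 ≤ m) (hm2 : m ≤ 2 * j + 1)
    (hgcd : Nat.gcd m (2 * j + 1) = 1) (hgcd' : Nat.gcd (m + 1) (2 * j + 1) = 1)
    (x y : ℝ) :
    (Lam m j ∩ ((fun p : ℝ × ℝ => (x + p.1, y + p.2)) '' Sstair j)).ncard = j :=
  stmt8_general j m hgcd hgcd' x y
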